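/- The clobber position ooxx on a path of four cells is equivalent to the zero game (a second-player win). -/

import Mathlib

namespace SetTheory

universe u

inductive PGame : Type (u + 1)
  | mk : ∀ α β : Type u, (α → PGame) → (β → PGame) → PGame

namespace PGame

def ofLists (L R : List PGame.{u}) : PGame.{u} :=
  mk (ULift (Fin L.length)) (ULift (Fin R.length)) (fun i => L.get i.down) fun j => R.get j.down

instance : Zero PGame :=
  ⟨⟨PEmpty, PEmpty, PEmpty.elim, PEmpty.elim⟩⟩

noncomputable def leLF (x : PGame.{u}) : PGame.{u} → Prop × Prop :=
  PGame.rec (motive := fun _ => PGame.{u} → Prop × Prop)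
    (fun _ _ _ _ IHxL IHxR y =>
      PGame.rec (motive := fun _ => Prop × Prop)
        (fun yl yr yL yR IHyL IHyR =>
          ((∀ i, (IHxL i (mk yl yr yL yR)).2) ∧ ∀ j, (IHyR j).2,
           (∃ i, (IHyL i).1) ∨ ∃ j, (IHxR j (mk yl yr yL yR)).1)) y) x

noncomputable instance : LE PGame :=
  ⟨fun x y => (leLF x y).1⟩

def Equiv (x y : PGame) : Prop :=
  x ≤ y ∧ y ≤ x

instance : HasEquiv PGame :=
  ⟨Equiv⟩

end PGame

end SetTheory

open SetTheory PGame

inductive Cell | x | o | e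
deriving DecidableEq

abbrev Pos := List Cell

/-- All positions reachable by one move of the player with stones `me`
clobbering an adjacent stone of the opponent `opp`. -/
def movesAux (me opp : Cell) : Pos → List Pos
  | a :: b :: rest =>
      (if a = me ∧ b = opp then [Cell.e :: me :: rest] else []) ++
      (if a = opp ∧ b = me then [me :: Cell.e :: rest] else []) ++
      (movesAux me opp (b :: rest)).map (a :: ·)
  | _ => []

def leftMoves (p : Pos) : List Pos := movesAux Cell.x Cell.o p
def rightMoves (p : Pos) : List Pos := movesAux Cell.o Cell.x p

def stones (p : Pos) : Nat := p.countP (· != Cell.e)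

/-- Game value of a clobber position, via fuel recursion (each move removes one stone). -/
def valueFuel : Nat → Pos → PGame
  | 0, _ => 0
  | n+1, p => PGame.ofLists ((leftMoves p).map (valueFuel n)) ((rightMoves p).map (valueFuel n))

def value (p : Pos) : PGame := valueFuel (stones p) p

/-!
From `ooxx` each player has a single move, to `oxex` (Left) or `oeox` (Right). In both of these
each player again has a single move, after which nobody can move, so both have value `* = {0 | 0}`.
Hence `ooxx = {* | *}`, and this is `0`: whoever moves first hands the opponent `*`, who then
moves to `0` and wins.
-/

namespace SetTheory.PGame

/-- Less or fuzzy: Left, moving first, wins `y - x`. -/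
def LF (x y : PGame) : Prop :=
  (leLF x y).2

infixl:50 " ⧏ " => LF

variable {L R : List PGame} {G : PGame}

theorem ofLists_le_zero (h : ∀ G ∈ L, G ⧏ 0) : ofLists L R ≤ 0 :=
  ⟨fun _ => h _ (List.get_mem _ _), fun j => j.elim⟩

theorem zero_le_ofLists (h : ∀ G ∈ R, 0 ⧏ G) : 0 ≤ ofLists L R :=
  ⟨fun i => i.elim, fun _ => h _ (List.get_mem _ _)⟩

theorem ofLists_lf_zero (hG : G ∈ R) (h : G ≤ 0) : ofLists L R ⧏ 0 := by
  obtain ⟨j, rfl⟩ := List.get_of_mem hG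
  exact Or.inr ⟨⟨j⟩, h⟩

theorem zero_lf_ofLists (hG : G ∈ L) (h : 0 ≤ G) : 0 ⧏ ofLists L R := by
  obtain ⟨i, rfl⟩ := List.get_of_mem hG
  exact Or.inl ⟨⟨i⟩, h⟩

theorem ofLists_equiv_zero (hL : ∀ G ∈ L, G ⧏ 0) (hR : ∀ G ∈ R, 0 ⧏ G) : ofLists L R ≈ 0 :=
  ⟨ofLists_le_zero hL, zero_le_ofLists hR⟩

/-- `{0 | 0}`, with `ofLists [] []` (the value of a terminal position) rather than the `0` instance. -/
def star : PGame :=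
  ofLists [ofLists [] []] [ofLists [] []]

theorem ofLists_nil_equiv_zero : ofLists [] [] ≈ 0 :=
  ofLists_equiv_zero (by simp) (by simp)

theorem star_lf_zero : star ⧏ 0 :=
  ofLists_lf_zero (List.mem_singleton_self _) ofLists_nil_equiv_zero.1

theorem zero_lf_star : 0 ⧏ star :=
  zero_lf_ofLists (List.mem_singleton_self _) ofLists_nil_equiv_zero.2

theorem ofLists_star_star_equiv_zero : ofLists [star] [star] ≈ 0 :=
  ofLists_equiv_zero (by simpa using star_lf_zero) (by simpa using zero_lf_star)

end SetTheory.PGame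

theorem stones_cons (a : Cell) (p : Pos) : stones (a :: p) = stones p + if a = .e then 0 else 1 := by
  simp [stones, List.countP_cons]

theorem stones_add_one_of_mem_movesAux {me opp : Cell} (hme : me ≠ .e) (hopp : opp ≠ .e) :
    ∀ {p q : Pos}, q ∈ movesAux me opp p → stones q + 1 = stones p
  | a :: b :: rest, q, hq => by
    simp only [movesAux, List.mem_append, List.mem_ite_nil_right, List.mem_singleton,
      List.mem_map] at hq
    rcases hq with (⟨⟨rfl, rfl⟩, rfl⟩ | ⟨⟨rfl, rfl⟩, rfl⟩) | ⟨q', hq', rfl⟩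
    · simp [stones_cons, hme, hopp]
    · simp [stones_cons, hme, hopp]
    · rw [stones_cons, stones_cons a, ← stones_add_one_of_mem_movesAux hme hopp hq']
      omega
  | [], _, hq | [_], _, hq => by simp [movesAux] at hq

theorem value_eq_ofLists {p : Pos} (hp : stones p ≠ 0) :
    value p = ofLists ((leftMoves p).map value) ((rightMoves p).map value) := by
  obtain ⟨n, hn⟩ := Nat.exists_eq_succ_of_ne_zero hp
  have hfuel : ∀ me opp, me ≠ .e → opp ≠ .e →
      ∀ q ∈ movesAux me opp p, valueFuel n q = value q := by
    intro me opp hme hopp q hq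
    have := stones_add_one_of_mem_movesAux hme hopp hq
    rw [value, show stones q = n by omega]
  rw [value, hn, valueFuel]
  exact congrArg₂ ofLists (List.map_congr_left (hfuel .x .o (by decide) (by decide)))
    (List.map_congr_left (hfuel .o .x (by decide) (by decide)))

/-- The clobber position `ooxx` is a second-player win, i.e. equivalent to `0`. -/
theorem ooxx_equiv_zero : value [Cell.o, Cell.o, Cell.x, Cell.x] ≈ (0 : PGame) := by
  have hstar : value [.o, .x, .e, .x] = PGame.star ∧ value [.o, .e, .o, .x] = PGame.star := by
    constructor <;>
      simp (disch := decide) [value_eq_ofLists, leftMoves, rightMoves, movesAux, PGame.star]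
  have hooxx : value [.o, .o, .x, .x] = ofLists [value [.o, .x, .e, .x]] [value [.o, .e, .o, .x]] :=
    value_eq_ofLists (by decide)
  rw [hooxx, hstar.1, hstar.2]
  exact PGame.ofLists_star_star_equiv_zero
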